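/- For any finite poset P and positive integer m, the number of lattice points in the m-th dilate of the chain polytope C(P) equals the number of order-preserving maps from P to {1,2,...,m+1}. -/

import Mathlib

/-!
Stanley's transfer map. For `y : P → ℕ` let `f i` be the largest sum of `y` over a chain of
elements `≤ i`. Then `f` is monotone and `f i = y i + max_{j < i} f j` (the maximum of nothing
being `0`), so `y` is recovered as `y i = f i - max_{j < i} f j`, and every monotone
`f : P → ℕ` arises this way. The chain sums of `y` are all at most `m` exactly when `f ≤ m`,
i.e. when `f` is an order-preserving map into `{0, …, m}`.
-/

noncomputable section

def nonnegIntFunEquiv {α : Type*} (P : (α → ℤ) → Prop) :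
    {y : α → ℤ // (∀ i, 0 ≤ y i) ∧ P y} ≃ {y : α → ℕ // P fun i => y i} where
  toFun y := ⟨fun i => (y.1 i).toNat, by
    convert y.2.2 using 1
    exact funext fun i => Int.toNat_of_nonneg (y.2.1 i)⟩
  invFun y := ⟨fun i => y.1 i, fun i => Int.natCast_nonneg _, y.2⟩
  left_inv y := Subtype.ext <| funext fun i => Int.toNat_of_nonneg (y.2.1 i)
  right_inv y := Subtype.ext <| funext fun i => Int.toNat_natCast _

def boundedMonotoneEquivFin {α : Type*} [Preorder α] (m : ℕ) :
    {f : α → ℕ // Monotone f ∧ ∀ i, f i ≤ m} ≃ {η : α → Fin (m + 1) // Monotone η} where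
  toFun f := ⟨fun i => ⟨f.1 i, Nat.lt_succ_of_le (f.2.2 i)⟩, fun _ _ h => f.2.1 h⟩
  invFun η := ⟨fun i => η.1 i, fun _ _ h => η.2 h, fun i => Nat.le_of_lt_succ (η.1 i).2⟩
  left_inv _ := rfl
  right_inv _ := rfl

open Finset

namespace ChainPolytope

variable {α : Type*} [PartialOrder α]

theorem exists_isGreatest_of_isChain {s : Finset α} (hs : IsChain (· ≤ ·) (s : Set α))
    (hne : s.Nonempty) : ∃ j, IsGreatest (s : Set α) j := by
  obtain ⟨j, hj, hmax⟩ := s.exists_maximal hne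
  exact ⟨j, hj, fun k hk => (hs.total hk hj).elim id (hmax hk)⟩

variable [Fintype α]

open scoped Classical in
def chainsBelow (i : α) : Finset (Finset α) :=
  {s | IsChain (· ≤ ·) (s : Set α) ∧ ∀ j ∈ s, j ≤ i}

open scoped Classical in
def supBelow (f : α → ℕ) (i : α) : ℕ := ({j | j < i} : Finset α).sup f

def maxChainSum (y : α → ℕ) (i : α) : ℕ := (chainsBelow i).sup fun s => ∑ j ∈ s, y j

theorem mem_chainsBelow {i : α} {s : Finset α} :
    s ∈ chainsBelow i ↔ IsChain (· ≤ ·) (s : Set α) ∧ ∀ j ∈ s, j ≤ i := by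
  simp [chainsBelow]

theorem le_supBelow (f : α → ℕ) {i j : α} (hji : j < i) : f j ≤ supBelow f i :=
  le_sup (by simpa using hji)

theorem supBelow_le {f : α → ℕ} (hf : Monotone f) (i : α) : supBelow f i ≤ f i :=
  Finset.sup_le fun j hj => hf (by simpa using hj : j < i).le

theorem supBelow_congr {f g : α → ℕ} {i : α} (h : ∀ j < i, f j = g j) :
    supBelow f i = supBelow g i :=
  Finset.sup_congr rfl fun j hj => h j (by simpa using hj)

theorem empty_mem_chainsBelow (i : α) : ∅ ∈ chainsBelow i :=
  mem_chainsBelow.2 ⟨by simp, by simp⟩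

theorem insert_mem_chainsBelow [DecidableEq α] {s : Finset α} {i j : α}
    (hs : s ∈ chainsBelow j) (hji : j ≤ i) : insert i s ∈ chainsBelow i := by
  obtain ⟨hchain, hle⟩ := mem_chainsBelow.1 hs
  refine mem_chainsBelow.2 ⟨?_, fun k hk => ?_⟩
  · rw [coe_insert]
    exact hchain.insert fun k hk _ => Or.inr ((hle k hk).trans hji)
  · rcases mem_insert.1 hk with rfl | hk
    exacts [le_rfl, (hle k hk).trans hji]

variable (y : α → ℕ)

theorem sum_le_maxChainSum {s : Finset α} {i : α} (hs : s ∈ chainsBelow i) :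
    ∑ j ∈ s, y j ≤ maxChainSum y i :=
  le_sup (f := fun s => ∑ j ∈ s, y j) hs

theorem maxChainSum_mono : Monotone (maxChainSum y) := fun _ _ hij =>
  sup_mono fun s hs => by
    obtain ⟨hchain, hle⟩ := mem_chainsBelow.1 hs
    exact mem_chainsBelow.2 ⟨hchain, fun k hk => (hle k hk).trans hij⟩

theorem add_maxChainSum_le {i j : α} (hji : j < i) :
    y i + maxChainSum y j ≤ maxChainSum y i := by
  classical
  obtain ⟨s, hs, hsum⟩ :=
    exists_mem_eq_sup _ ⟨∅, empty_mem_chainsBelow j⟩ fun s => ∑ k ∈ s, y k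
  have hi : i ∉ s := fun hi => (mem_chainsBelow.1 hs).2 i hi |>.not_gt hji
  rw [maxChainSum, hsum, ← sum_insert hi]
  exact sum_le_maxChainSum y (insert_mem_chainsBelow hs hji.le)

theorem maxChainSum_le_add_supBelow (i : α) :
    maxChainSum y i ≤ y i + supBelow (maxChainSum y) i := by
  classical
  refine Finset.sup_le fun s hs => ?_
  obtain ⟨hchain, hle⟩ := mem_chainsBelow.1 hs
  have hrest : ∑ j ∈ s.erase i, y j ≤ supBelow (maxChainSum y) i := by
    rcases (s.erase i).eq_empty_or_nonempty with he | hne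
    · simp [he]
    have hchain' : IsChain (· ≤ ·) ((s.erase i : Finset α) : Set α) :=
      hchain.mono (coe_subset.2 (erase_subset i s))
    obtain ⟨j, hj, hjtop⟩ := exists_isGreatest_of_isChain hchain' hne
    have hji : j < i := (hle j (mem_of_mem_erase hj)).lt_of_ne (ne_of_mem_erase hj)
    calc ∑ k ∈ s.erase i, y k ≤ maxChainSum y j :=
          sum_le_maxChainSum y (mem_chainsBelow.2 ⟨hchain', hjtop⟩)
      _ ≤ supBelow (maxChainSum y) i := le_supBelow _ hji
  calc ∑ j ∈ s, y j ≤ ∑ j ∈ insert i (s.erase i), y j :=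
        sum_le_sum_of_subset (insert_erase_subset i s)
    _ = y i + ∑ j ∈ s.erase i, y j := sum_insert (notMem_erase i s)
    _ ≤ y i + supBelow (maxChainSum y) i := by omega

theorem maxChainSum_eq_add_supBelow (i : α) :
    maxChainSum y i = y i + supBelow (maxChainSum y) i := by
  classical
  refine (maxChainSum_le_add_supBelow y i).antisymm ?_
  have hsingle : y i ≤ maxChainSum y i := by
    simpa using sum_le_maxChainSum y (insert_mem_chainsBelow (empty_mem_chainsBelow i) le_rfl)
  suffices supBelow (maxChainSum y) i ≤ maxChainSum y i - y i by omega
  exact Finset.sup_le fun j hj =>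
    Nat.le_sub_of_add_le' (add_maxChainSum_le y (by simpa using hj))

theorem eq_maxChainSum_of_forall_eq_add_supBelow {f : α → ℕ}
    (hf : ∀ i, f i = y i + supBelow f i) : f = maxChainSum y := by
  funext i
  induction i using WellFoundedLT.induction with
  | ind i ih => rw [hf, maxChainSum_eq_add_supBelow, supBelow_congr ih]

theorem forall_maxChainSum_le_iff (m : ℕ) :
    (∀ i, maxChainSum y i ≤ m) ↔
      ∀ s : Finset α, IsChain (· ≤ ·) (s : Set α) → ∑ i ∈ s, y i ≤ m := by
  refine ⟨fun h s hs => ?_, fun h i => Finset.sup_le fun s hs => h s (mem_chainsBelow.1 hs).1⟩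
  rcases s.eq_empty_or_nonempty with rfl | hne
  · simp
  obtain ⟨j, hj⟩ := exists_isGreatest_of_isChain hs hne
  exact (sum_le_maxChainSum y (mem_chainsBelow.2 ⟨hs, hj.2⟩)).trans (h j)

variable (α) in
def transferEquiv : (α → ℕ) ≃ {f : α → ℕ // Monotone f} where
  toFun y := ⟨maxChainSum y, maxChainSum_mono y⟩
  invFun f i := f.1 i - supBelow f.1 i
  left_inv y := funext fun i => by
    simp only [maxChainSum_eq_add_supBelow y i, Nat.add_sub_cancel]
  right_inv f := Subtype.ext <| .symm <| eq_maxChainSum_of_forall_eq_add_supBelow _ fun i =>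
    (Nat.sub_add_cancel (supBelow_le f.2 i)).symm

end ChainPolytope

open ChainPolytope in
theorem chainPolytope_dilate_latticePoints_card_general
    (α : Type*) [Fintype α] [PartialOrder α] (m : ℕ) :
    Nat.card {y : α → ℤ // (∀ i, 0 ≤ y i) ∧
        ∀ s : Finset α, IsChain (· ≤ ·) (s : Set α) → ∑ i ∈ s, y i ≤ (m : ℤ)} =
      Nat.card {η : α → Fin (m + 1) // ∀ x y : α, x ≤ y → η x ≤ η y} := by
  have hbound (y : α → ℕ) :
      (∀ s : Finset α, IsChain (· ≤ ·) (s : Set α) → ∑ i ∈ s, (y i : ℤ) ≤ m) ↔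
        ∀ i, maxChainSum y i ≤ m := by
    rw [forall_maxChainSum_le_iff]
    exact_mod_cast Iff.rfl
  exact Nat.card_congr <|
    (nonnegIntFunEquiv _).trans <| (Equiv.subtypeEquivRight hbound).trans <|
      ((transferEquiv α).subtypeEquiv fun _ => Iff.rfl).trans <|
        (Equiv.subtypeSubtypeEquivSubtypeInter _ _).trans (boundedMonotoneEquivFin m)

/-- For a finite poset `P` and positive integer `m`, the number of lattice points in the
`m`-th dilate of the chain polytope `C(P)` (integer vectors `y` with `y i ≥ 0` and
`∑_{i ∈ s} y i ≤ m` for every chain `s` of `P`) equals the number of order-preserving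
maps from `P` to `{1,...,m+1}`. -/
theorem chainPolytope_dilate_latticePoints_card
    (α : Type*) [Fintype α] [PartialOrder α] (m : ℕ) (hm : 0 < m) :
    Nat.card {y : α → ℤ // (∀ i, 0 ≤ y i) ∧
        ∀ s : Finset α, IsChain (· ≤ ·) (s : Set α) → ∑ i ∈ s, y i ≤ (m : ℤ)} =
      Nat.card {η : α → Fin (m + 1) // ∀ x y : α, x ≤ y → η x ≤ η y} :=
  chainPolytope_dilate_latticePoints_card_general α m
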